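/- arXiv:0907.4732 — 5 statements merged into one kernel-verified Lean document; each statement's English description precedes it below -/
import Mathlib

section
/- For any rack X and a ∈ X, the maps hₐ(x₁,…,xₙ) = (x₁,…,xₙ,a), multiplied by (-1)^{n+1}, form a chain homotopy between the identity and the chain map *ₐ; explicitly, ∂∘hₐ = hₐ∘∂ + (-1)^{n+1}(Id - *ₐ) on Cₙᴿ(X). -/
/-- The rack boundary map on the rack chain complex (direct sum over all degrees,
modelled as the free abelian group on `List X`). -/
noncomputable def rackBd {X : Type*} (op : X → X → X) :
    FreeAbelianGroup (List X) →+ FreeAbelianGroup (List X) :=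
  FreeAbelianGroup.lift (fun l =>
    ∑ j : Fin l.length, ((-1 : ℤ) ^ ((j : ℕ) + 1)) •
      (FreeAbelianGroup.of (l.eraseIdx (j : ℕ)) -
       FreeAbelianGroup.of
         (((l.take (j : ℕ)).map (fun y => op y (l.get j))) ++ l.drop ((j : ℕ) + 1))))

/-- The map `hₐ` appending the element `a`: `hₐ(x₁,…,xₙ) = (x₁,…,xₙ,a)`. -/
noncomputable def rackHa {X : Type*} (a : X) :
    FreeAbelianGroup (List X) →+ FreeAbelianGroup (List X) :=
  FreeAbelianGroup.lift (fun l => FreeAbelianGroup.of (l ++ [a]))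

lemma rackBd_of {X : Type*} (op : X → X → X) (a : X) (L : List X) :
    rackBd op (FreeAbelianGroup.of L) =
      ∑ j ∈ Finset.range L.length, ((-1 : ℤ) ^ (j + 1)) •
        (FreeAbelianGroup.of (L.eraseIdx j) -
         FreeAbelianGroup.of
           (((L.take j).map (fun y => op y (L.getD j a))) ++ L.drop (j + 1))) := by
  rw [rackBd, FreeAbelianGroup.lift_apply_of, ← Fin.sum_univ_eq_sum_range]
  refine Finset.sum_congr rfl fun j _ => ?_
  rw [List.get_eq_getElem, List.getD_eq_getElem L a j.isLt]

/-- `(-1)^{n+1} hₐ` is a chain homotopy between the identity and `*ₐ`: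
on a generator `(x₁,…,xₙ)` one has
`∂(hₐ(x)) = hₐ(∂x) + (-1)^{n+1}·((x) - (x*a))`. -/
theorem rackHa_chain_homotopy {X : Type*} (op : X → X → X) (a : X)
    (hbij : ∀ b : X, Function.Bijective (fun x : X => op x b))
    (hdist : ∀ a b c : X, op (op a b) c = op (op a c) (op b c)) :
    ∀ l : List X,
      rackBd op (rackHa a (FreeAbelianGroup.of l)) =
        rackHa a (rackBd op (FreeAbelianGroup.of l)) +
          ((-1 : ℤ) ^ (l.length + 1)) •
            (FreeAbelianGroup.of l - FreeAbelianGroup.of (l.map (fun y => op y a))) := by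
  intro l
  rw [rackHa, FreeAbelianGroup.lift_apply_of, rackBd_of op a, rackBd_of op a, map_sum]
  simp only [map_zsmul, map_sub, FreeAbelianGroup.lift_apply_of]
  rw [List.length_append, List.length_singleton, Finset.sum_range_succ]
  congr 1
  · refine Finset.sum_congr rfl fun j hj => ?_
    rw [Finset.mem_range] at hj
    rw [List.eraseIdx_append_of_lt_length hj,
        List.getD_eq_getElem (l ++ [a]) a (by simp; omega), List.getD_eq_getElem l a hj,
        List.getElem_append_left hj,
        List.take_append, Nat.sub_eq_zero_of_le hj.le, List.take_zero,
        List.append_nil, List.drop_append, Nat.sub_eq_zero_of_le hj,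
        List.drop_zero, List.append_assoc]
  · rw [List.eraseIdx_append_of_length_le le_rfl, Nat.sub_self]
    simp only [List.eraseIdx, List.append_nil]
    congr 2
    rw [List.take_left, List.drop_eq_nil_of_le (by simp), List.append_nil]
    congr 1
    rw [List.getD_eq_getElem (l ++ [a]) a (by simp)]
    simp
end

section
/- Let X be a rack, Y an X-set, and X₁ a finite invariant subrack of X. The map φ(y,x₂,…,xₙ) = Σ_{x∈X₁}(y*x,x₂,…,xₙ) on C_nᴿ(X,Y) is a chain map chain homotopic to |X₁|·Id, with homotopy H(y,x₂,…,xₙ) = Σ_{x∈X₁}(y,x,x₂,…,xₙ): dH + Hd = |X₁|·Id - φ. -/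
/-- The boundary map on the rack chain complex of the pair `(X,Y)` for a rack
`X` and an `X`-set `Y`: a generator of `Cₙᴿ(X,Y)` is a pair `(y, (x₂,…,xₙ))`. -/
noncomputable def pairBd {X Y : Type*} (op : X → X → X) (act : Y → X → Y) :
    FreeAbelianGroup (Y × List X) →+ FreeAbelianGroup (Y × List X) :=
  FreeAbelianGroup.lift (fun p =>
    ∑ j : Fin p.2.length, ((-1 : ℤ) ^ (j : ℕ)) •
      (FreeAbelianGroup.of (p.1, p.2.eraseIdx (j : ℕ)) -
       FreeAbelianGroup.of (act p.1 (p.2.get j),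
         ((p.2.take (j : ℕ)).map (fun y => op y (p.2.get j))) ++ p.2.drop ((j : ℕ) + 1))))

/-- `φ(y,x₂,…,xₙ) = Σ_{x∈X₁} (y*x, x₂,…,xₙ)`. -/
noncomputable def mapPhi {X Y : Type*} (act : Y → X → Y) (X₁ : Finset X) :
    FreeAbelianGroup (Y × List X) →+ FreeAbelianGroup (Y × List X) :=
  FreeAbelianGroup.lift (fun p => ∑ x ∈ X₁, FreeAbelianGroup.of (act p.1 x, p.2))

/-- `H(y,x₂,…,xₙ) = Σ_{x∈X₁} (y, x, x₂,…,xₙ)`. -/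
noncomputable def mapH {X Y : Type*} (X₁ : Finset X) :
    FreeAbelianGroup (Y × List X) →+ FreeAbelianGroup (Y × List X) :=
  FreeAbelianGroup.lift (fun p => ∑ x ∈ X₁, FreeAbelianGroup.of (p.1, x :: p.2))


open FreeAbelianGroup

section aux

variable {X Y : Type*} (op : X → X → X) (act : Y → X → Y)

lemma sum_reindex {M : Type*} [AddCommMonoid M] (X₁ : Finset X)
    (hbij : ∀ b : X, Function.Bijective (fun x : X => op x b))
    (hinv : ∀ a ∈ X₁, ∀ b : X, op a b ∈ X₁) (b : X) (f : X → M) :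
    ∑ x ∈ X₁, f (op x b) = ∑ x ∈ X₁, f x := by
  refine Finset.sum_bij (fun x _ => op x b) (fun a ha => hinv a ha b)
    (fun a₁ h₁ a₂ h₂ h => (hbij b).1 h) ?_ (fun a ha => rfl)
  intro c hc
  obtain ⟨a, ha, h⟩ := Finset.surj_on_of_inj_on_of_card_le (fun a (_ : a ∈ X₁) => op a b)
    (fun a ha => hinv a ha b) (fun a₁ a₂ _ _ h => (hbij b).1 h) le_rfl c hc
  exact ⟨a, ha, h.symm⟩

lemma pairBd_of (p : Y × List X) :
    pairBd op act (of p) =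
    ∑ j : Fin p.2.length, ((-1 : ℤ) ^ (j : ℕ)) •
      (of (p.1, p.2.eraseIdx (j : ℕ)) -
       of (act p.1 (p.2.get j),
         ((p.2.take (j : ℕ)).map (fun y => op y (p.2.get j))) ++ p.2.drop ((j : ℕ) + 1))) :=
  FreeAbelianGroup.lift_apply_of _ _

lemma mapPhi_of (X₁ : Finset X) (p : Y × List X) :
    mapPhi act X₁ (of p) = ∑ x ∈ X₁, of (act p.1 x, p.2) :=
  FreeAbelianGroup.lift_apply_of _ _

lemma mapH_of (X₁ : Finset X) (p : Y × List X) :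
    mapH X₁ (of p) = ∑ x ∈ X₁, of (p.1, x :: p.2) :=
  FreeAbelianGroup.lift_apply_of _ _

lemma pairBd_of_cons (y : Y) (x : X) (l : List X) :
    pairBd op act (of (y, x :: l)) =
    (of (y, l) - of (act y x, l)) +
    ∑ i : Fin l.length, ((-1 : ℤ) ^ ((i : ℕ) + 1)) •
      (of (y, x :: l.eraseIdx (i : ℕ)) -
       of (act y (l.get i),
         op x (l.get i) :: (((l.take (i : ℕ)).map (fun z => op z (l.get i))) ++
           l.drop ((i : ℕ) + 1)))) := by
  have h : pairBd op act (of (y, x :: l)) =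
      ∑ j : Fin (l.length + 1), ((-1 : ℤ) ^ (j : ℕ)) •
        (of (y, (x :: l).eraseIdx (j : ℕ)) -
         of (act y ((x :: l).get j),
           (((x :: l).take (j : ℕ)).map (fun z => op z ((x :: l).get j))) ++
             (x :: l).drop ((j : ℕ) + 1))) := pairBd_of op act (y, x :: l)
  rw [h, Fin.sum_univ_succ]
  simp [List.eraseIdx_cons_succ, List.take_succ_cons, List.drop_succ_cons]

end aux

/-- For a rack `X`, an `X`-set `Y`, and a finite invariant subrack `X₁ ⊆ X`,
the map `φ(y,x₂,…,xₙ) = Σ_{x∈X₁}(y*x,x₂,…,xₙ)` is a chain map, chain homotopic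
to `|X₁|·Id` via `H(y,x₂,…,xₙ) = Σ_{x∈X₁}(y,x,x₂,…,xₙ)`:
`dH + Hd = |X₁|·Id - φ`. -/
theorem phi_chain_homotopic {X Y : Type*} (op : X → X → X) (act : Y → X → Y)
    (X₁ : Finset X)
    (hbij : ∀ b : X, Function.Bijective (fun x : X => op x b))
    (hdist : ∀ a b c : X, op (op a b) c = op (op a c) (op b c))
    (hYbij : ∀ x : X, Function.Bijective (fun y : Y => act y x))
    (hYdist : ∀ (y : Y) (a b : X), act (act y a) b = act (act y b) (op a b))
    (hinv : ∀ a ∈ X₁, ∀ b : X, op a b ∈ X₁) :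
    ((pairBd op act).comp (mapPhi act X₁) = (mapPhi act X₁).comp (pairBd op act)) ∧
    ((pairBd op act).comp (mapH X₁) + (mapH X₁).comp (pairBd op act) =
      X₁.card • AddMonoidHom.id (FreeAbelianGroup (Y × List X)) - mapPhi act X₁) := by
  constructor
  · ext ⟨y, l⟩
    rw [AddMonoidHom.comp_apply, AddMonoidHom.comp_apply, mapPhi_of, map_sum]
    simp only [pairBd_of]
    rw [Finset.sum_comm (t := (Finset.univ : Finset (Fin l.length))), map_sum]
    refine Finset.sum_congr rfl fun j _ => ?_
    rw [map_zsmul, map_sub, mapPhi_of, mapPhi_of, ← Finset.smul_sum, Finset.sum_sub_distrib]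
    congr 2
    refine (Finset.sum_congr rfl fun x _ => by rw [hYdist]).trans
      (sum_reindex op X₁ hbij hinv (l.get j)
        (fun z => of (act (act y (l.get j)) z,
          List.map (fun w => op w (l.get j)) (List.take (↑j) l) ++ List.drop (↑j + 1) l)))
  · ext ⟨y, l⟩
    have hb : ∀ (b : X) (M : List X),
        ∑ x ∈ X₁, of (act y b, op x b :: M) = ∑ x ∈ X₁, of (act y b, x :: M) :=
      fun b M => sum_reindex op X₁ hbij hinv b (fun z => of (act y b, z :: M))
    rw [AddMonoidHom.add_apply, AddMonoidHom.comp_apply, AddMonoidHom.comp_apply,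
      mapH_of, map_sum]
    simp only [pairBd_of_cons op act]
    rw [pairBd_of, map_sum]
    simp only [map_zsmul, map_sub, mapH_of]
    rw [AddMonoidHom.sub_apply, AddMonoidHom.nsmul_apply, AddMonoidHom.id_apply, mapPhi_of]
    rw [Finset.sum_add_distrib, Finset.sum_sub_distrib, Finset.sum_const]
    rw [Finset.sum_comm, add_assoc, ← Finset.sum_add_distrib]
    have hz : ∀ j ∈ Finset.univ (α := Fin l.length),
        (∑ x ∈ X₁, ((-1 : ℤ) ^ ((j : ℕ) + 1)) •
          (of (y, x :: l.eraseIdx (j : ℕ)) -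
           of (act y (l.get j),
             op x (l.get j) :: (((l.take (j : ℕ)).map (fun z => op z (l.get j))) ++
               l.drop ((j : ℕ) + 1))))) +
        ((-1 : ℤ) ^ (j : ℕ)) •
          ((∑ x ∈ X₁, of (y, x :: l.eraseIdx (j : ℕ))) -
           ∑ x ∈ X₁, of (act y (l.get j),
             x :: (((l.take (j : ℕ)).map (fun z => op z (l.get j))) ++
               l.drop ((j : ℕ) + 1)))) = 0 := by
      intro j _
      rw [← Finset.smul_sum, Finset.sum_sub_distrib, hb (l.get j)]
      simp only [pow_succ, mul_neg_one, neg_smul, neg_add_cancel]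
    rw [Finset.sum_congr rfl hz, Finset.sum_const_zero]
    simp
end

section
/- For a quandle Q and q ∈ Q, the partial derivatives satisfy (∂¹/∂q)∘(∂¹/∂q) = 0 on rack chains, where ∂¹/∂q (x₁,…,xₙ) = Σᵢ(-1)ⁱ(x₁*xᵢ,…,x_{i-1}*xᵢ,x_{i+1},…,xₙ)·δ_{xᵢ,q}. -/
/-- The quandle partial derivative `∂¹/∂q` on rack chains (direct sum over all
degrees, modelled as the free abelian group on `List X`):
`∂¹/∂q (x₁,…,xₙ) = Σᵢ (-1)ⁱ (x₁*xᵢ,…,x_{i-1}*xᵢ,x_{i+1},…,xₙ) δ_{xᵢ,q}`. -/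
noncomputable def pder1 {X : Type*} [DecidableEq X] (op : X → X → X) (q : X) :
    FreeAbelianGroup (List X) →+ FreeAbelianGroup (List X) :=
  FreeAbelianGroup.lift (fun l =>
    ∑ j : Fin l.length, ((-1 : ℤ) ^ ((j : ℕ) + 1)) •
      (if l.get j = q then
        FreeAbelianGroup.of
          (((l.take (j : ℕ)).map (fun y => op y (l.get j))) ++ l.drop ((j : ℕ) + 1))
      else 0))

open Finset

namespace Pder1Aux

variable {X : Type*} [DecidableEq X] (op : X → X → X) (q : X)

/-- Delete entry `j`, acting on earlier entries by `· * q`. -/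
def dl (j : ℕ) (l : List X) : List X :=
  ((l.take j).map (fun y => op y q)) ++ l.drop (j + 1)

lemma dl_length {l : List X} {j : ℕ} (hj : j < l.length) :
    (dl op q j l).length = l.length - 1 := by
  simp [dl]; omega

lemma dl_getElem?_lt {l : List X} {j k : ℕ} (hk : k < j) (hkl : k < l.length) :
    (dl op q j l)[k]? = Option.map (fun y => op y q) l[k]? := by
  have h1 : k < ((l.take j).map (fun y => op y q)).length := by
    simp; omega
  rw [dl, List.getElem?_append, if_pos h1, List.getElem?_map, List.getElem?_take,
    if_pos hk]

lemma dl_getElem?_ge {l : List X} {j k : ℕ} (hjk : j ≤ k) (hj : j < l.length) :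
    (dl op q j l)[k]? = l[k + 1]? := by
  have h1 : ((l.take j).map (fun y => op y q)).length = j := by
    simp; omega
  rw [dl, List.getElem?_append, h1, if_neg (by omega), List.getElem?_drop]
  congr 1; omega

lemma dl_comm {l : List X} {j k : ℕ} (hk : k < j) (hj : j < l.length) :
    dl op q k (dl op q j l) = dl op q (j - 1) (dl op q k l) := by
  have hkl : k < l.length := hk.trans hj
  have hlen1 : (dl op q j l).length = l.length - 1 := dl_length op q hj
  have hlen2 : (dl op q k l).length = l.length - 1 := dl_length op q hkl
  have hk1 : k < (dl op q j l).length := by omega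
  have hj1 : j - 1 < (dl op q k l).length := by omega
  apply List.ext_getElem?
  intro m
  by_cases hm : m < l.length - 2
  · by_cases h1 : m < k
    · rw [dl_getElem?_lt op q (l := dl op q j l) h1 (by omega),
        dl_getElem?_lt op q (l := l) (j := j) (h1.trans hk) (by omega),
        dl_getElem?_lt op q (l := dl op q k l) (j := j - 1) (by omega) (by omega),
        dl_getElem?_lt op q (l := l) (j := k) h1 (by omega)]
    · by_cases h2 : m < j - 1
      · rw [dl_getElem?_ge op q (l := dl op q j l) (by omega) (by omega),
          dl_getElem?_lt op q (l := l) (j := j) (by omega) (by omega),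
          dl_getElem?_lt op q (l := dl op q k l) (j := j - 1) (by omega) (by omega),
          dl_getElem?_ge op q (l := l) (j := k) (by omega) (by omega)]
      · rw [dl_getElem?_ge op q (l := dl op q j l) (by omega) (by omega),
          dl_getElem?_ge op q (l := l) (j := j) (by omega) (by omega),
          dl_getElem?_ge op q (l := dl op q k l) (j := j - 1) (by omega) (by omega),
          dl_getElem?_ge op q (l := l) (j := k) (by omega) (by omega)]
  · rw [List.getElem?_eq_none, List.getElem?_eq_none]
    · rw [dl_length op q hj1, hlen2]; omega
    · rw [dl_length op q hk1, hlen1]; omega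

/-- A single signed face term. -/
noncomputable def term (l : List X) (j : ℕ) : FreeAbelianGroup (List X) :=
  if l[j]? = some q then
    ((-1 : ℤ) ^ (j + 1)) • FreeAbelianGroup.of (dl op q j l) else 0

lemma pder1_of (l : List X) :
    pder1 op q (FreeAbelianGroup.of l) = ∑ j ∈ range l.length, term op q l j := by
  rw [pder1, FreeAbelianGroup.lift_apply_of,
    ← Fin.sum_univ_eq_sum_range (fun j => term op q l j) l.length]
  refine Finset.sum_congr rfl fun j _ => ?_
  have hj : (j : ℕ) < l.length := j.isLt
  rw [term, List.getElem?_eq_getElem hj]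
  simp only [List.get_eq_getElem]
  by_cases h : l[(j : ℕ)] = q
  · rw [if_pos h, if_pos (by rw [h]), h]; rfl
  · rw [if_neg h, if_neg (by simpa using h), smul_zero]

/-- The double-face term, indexed by a pair. -/
noncomputable def S (l : List X) (p : ℕ × ℕ) : FreeAbelianGroup (List X) :=
  if l[p.1]? = some q ∧ (dl op q p.1 l)[p.2]? = some q then
    ((-1 : ℤ) ^ (p.1 + 1) * (-1 : ℤ) ^ (p.2 + 1)) •
      FreeAbelianGroup.of (dl op q p.2 (dl op q p.1 l))
  else 0

lemma pder1_term (l : List X) (j : ℕ) :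
    pder1 op q (term op q l j) = ∑ k ∈ range (l.length - 1), S op q l (j, k) := by
  rw [term]
  split_ifs with h
  · have hj : j < l.length := (List.getElem?_eq_some_iff.mp h).1
    rw [map_zsmul, pder1_of, dl_length op q hj, Finset.smul_sum]
    refine Finset.sum_congr rfl fun k _ => ?_
    rw [term, S]
    simp only [h, true_and]
    split_ifs with h2
    · rw [smul_smul]
    · simp
  · rw [map_zero]
    exact (Finset.sum_eq_zero fun k _ => by rw [S]; exact if_neg (by tauto)).symm

lemma cond_lt (hq : ∀ x : X, op x q = q ↔ x = q) {l : List X} {j k : ℕ}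
    (hk : k < j) (hkl : k < l.length) :
    ((dl op q j l)[k]? = some q) ↔ (l[k]? = some q) := by
  rw [dl_getElem?_lt op q hk hkl, List.getElem?_eq_getElem hkl]
  simp [hq]

lemma cond_ge {l : List X} {j k : ℕ} (hjk : j ≤ k) (hj : j < l.length) :
    ((dl op q j l)[k]? = some q) ↔ (l[k + 1]? = some q) := by
  rw [dl_getElem?_ge op q hjk hj]

lemma pair_cancel (hq : ∀ x : X, op x q = q ↔ x = q) {l : List X} {j k : ℕ}
    (hk : k < j) (hj : j < l.length) (hk2 : k < l.length - 1) :
    S op q l (j, k) + S op q l (k, j - 1) = 0 := by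
  have hkl : k < l.length := by omega
  have hc1 : ((dl op q j l)[k]? = some q) ↔ (l[k]? = some q) :=
    cond_lt op q hq hk hkl
  have hc2 : ((dl op q k l)[j - 1]? = some q) ↔ (l[j]? = some q) := by
    rw [cond_ge op q (by omega) hkl]
    congr! 2
    omega
  rw [S, S]
  dsimp only
  by_cases hc : l[j]? = some q ∧ l[k]? = some q
  · rw [if_pos ⟨hc.1, hc1.mpr hc.2⟩, if_pos ⟨hc.2, hc2.mpr hc.1⟩,
      dl_comm op q hk hj, ← add_smul]
    have hj1 : j - 1 + 1 = j := by omega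
    rw [hj1]
    have : (-1 : ℤ) ^ (j + 1) * (-1 : ℤ) ^ (k + 1) +
        (-1 : ℤ) ^ (k + 1) * (-1 : ℤ) ^ j = 0 := by
      rw [pow_succ ((-1 : ℤ)) j]; ring
    rw [this, zero_smul]
  · rw [if_neg (by tauto), if_neg (by rw [hc2]; tauto), add_zero]

lemma key (hq : ∀ x : X, op x q = q ↔ x = q) (l : List X) :
    pder1 op q (pder1 op q (FreeAbelianGroup.of l)) = 0 := by
  rw [pder1_of, map_sum]
  have h1 : ∀ j ∈ range l.length, pder1 op q (term op q l j)
      = ∑ k ∈ range (l.length - 1), S op q l (j, k) :=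
    fun j _ => pder1_term op q l j
  rw [Finset.sum_congr rfl h1, ← Finset.sum_product (range l.length)
    (range (l.length - 1)) (S op q l)]
  refine Finset.sum_involution
    (fun p _ => if p.2 < p.1 then (p.2, p.1 - 1) else (p.2 + 1, p.1))
    ?_ ?_ ?_ ?_
  · rintro ⟨j, k⟩ hp
    simp only [Finset.mem_product, Finset.mem_range] at hp
    by_cases h : k < j
    · simpa [h] using pair_cancel op q hq h hp.1 hp.2
    · have h' : j < k + 1 := by omega
      simp only [if_neg h]
      rw [add_comm]
      have := pair_cancel op q hq h' (by omega) (by omega) (l := l)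
      simpa using this
  · rintro ⟨j, k⟩ hp _
    simp only [Prod.mk.injEq, ne_eq]
    split_ifs with h <;> simp [Prod.ext_iff] <;> omega
  · rintro ⟨j, k⟩ hp
    simp only [Finset.mem_product, Finset.mem_range] at hp ⊢
    split_ifs with h <;> constructor <;> omega
  · rintro ⟨j, k⟩ hp
    simp only [Finset.mem_product, Finset.mem_range] at hp
    by_cases h : k < j
    · simp only [if_pos h, if_neg (by omega : ¬ j - 1 < k)]
      simp; omega
    · simp only [if_neg h, if_pos (by omega : j < k + 1)]
      simp

end Pder1Aux


/-- For a quandle `Q` and `q ∈ Q`, the partial derivative satisfies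
`(∂¹/∂q) ∘ (∂¹/∂q) = 0`. -/
theorem pder1_squared_zero {X : Type*} [DecidableEq X] (op : X → X → X) (q : X)
    (hidem : ∀ a : X, op a a = a)
    (hbij : ∀ b : X, Function.Bijective (fun x : X => op x b))
    (hdist : ∀ a b c : X, op (op a b) c = op (op a c) (op b c)) :
    (pder1 op q).comp (pder1 op q) = 0 := by
  ext l
  have hq : ∀ x : X, op x q = q ↔ x = q := fun x =>
    ⟨fun h => (hbij q).1 (by simpa [hidem q] using h), fun h => h ▸ hidem q⟩
  simpa using Pder1Aux.key op q hq l
end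

section
/- For a quandle Q and q ∈ Q, the mixed partial derivatives anticommute: (∂⁰/∂q)∘(∂¹/∂q) + (∂¹/∂q)∘(∂⁰/∂q) = 0 on Cₙᴿ(Q), where ∂⁰/∂q (x₁,…,xₙ) = Σᵢ(-1)ⁱ(x₁,…,x̂ᵢ,…,xₙ)δ_{xᵢ,q} and ∂¹/∂q (x₁,…,xₙ) = Σᵢ(-1)ⁱ(x₁*xᵢ,…,x_{i-1}*xᵢ,x_{i+1},…,xₙ)δ_{xᵢ,q}. -/
/-- The quandle partial derivative `∂⁰/∂q`:
`∂⁰/∂q (x₁,…,xₙ) = Σᵢ (-1)ⁱ (x₁,…,x̂ᵢ,…,xₙ) δ_{xᵢ,q}`. -/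
noncomputable def pder0 {X : Type*} [DecidableEq X] (q : X) :
    FreeAbelianGroup (List X) →+ FreeAbelianGroup (List X) :=
  FreeAbelianGroup.lift (fun l =>
    ∑ j : Fin l.length, ((-1 : ℤ) ^ ((j : ℕ) + 1)) •
      (if l.get j = q then FreeAbelianGroup.of (l.eraseIdx (j : ℕ)) else 0))

section Aux
set_option linter.unusedSectionVars false
variable {X : Type*} [DecidableEq X] (op : X → X → X) (q : X)

lemma pder1_of (l : List X) :
    pder1 op q (FreeAbelianGroup.of l) =
    ∑ j ∈ Finset.range l.length, ((-1 : ℤ) ^ (j + 1)) •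
      (if l[j]? = some q then
        FreeAbelianGroup.of (((l.take j).map (fun y => op y q)) ++ l.drop (j + 1))
      else 0) := by
  rw [pder1, FreeAbelianGroup.lift_apply_of, ← Fin.sum_univ_eq_sum_range]
  refine Finset.sum_congr rfl fun j _ => ?_
  by_cases h : l.get j = q
  · simp [List.get_eq_getElem, List.getElem?_eq_getElem j.isLt, h,
      ← List.get_eq_getElem] at h ⊢
  · simp [h, List.getElem?_eq_getElem j.isLt, (List.get_eq_getElem (l := l) (i := j)) ▸ h]

lemma pder0_of (l : List X) :
    pder0 q (FreeAbelianGroup.of l) =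
    ∑ j ∈ Finset.range l.length, ((-1 : ℤ) ^ (j + 1)) •
      (if l[j]? = some q then FreeAbelianGroup.of (l.eraseIdx j) else 0) := by
  rw [pder0, FreeAbelianGroup.lift_apply_of, ← Fin.sum_univ_eq_sum_range]
  refine Finset.sum_congr rfl fun j _ => ?_
  by_cases h : l.get j = q
  · simp [List.get_eq_getElem, List.getElem?_eq_getElem j.isLt, h,
      ← List.get_eq_getElem] at h ⊢
  · simp [h, List.getElem?_eq_getElem j.isLt, (List.get_eq_getElem (l := l) (i := j)) ▸ h]

noncomputable def T1 (l : List X) (j i : ℕ) : FreeAbelianGroup (List X) :=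
  ((-1 : ℤ) ^ (j + i)) •
    (if l[j]? = some q ∧ ((l.take j).map (fun y => op y q) ++ l.drop (j+1))[i]? = some q
     then FreeAbelianGroup.of
        (((l.take j).map (fun y => op y q) ++ l.drop (j+1)).eraseIdx i) else 0)

noncomputable def T2 (l : List X) (a b : ℕ) : FreeAbelianGroup (List X) :=
  ((-1 : ℤ) ^ (a + b)) •
    (if l[a]? = some q ∧ (l.eraseIdx a)[b]? = some q
     then FreeAbelianGroup.of
        ((((l.eraseIdx a).take b).map (fun y => op y q)) ++ (l.eraseIdx a).drop (b+1))
     else 0)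

lemma sign_eq (j i : ℕ) : ((-1 : ℤ) ^ (j + 1)) * ((-1 : ℤ) ^ (i + 1)) = (-1) ^ (j + i) := by
  rw [← pow_add, show j + 1 + (i + 1) = (j + i) + 2 by ring, pow_add]
  norm_num

lemma comp1 (l : List X) :
    pder0 q (pder1 op q (FreeAbelianGroup.of l)) =
    ∑ j ∈ Finset.range l.length, ∑ i ∈ Finset.range (l.length - 1), T1 op q l j i := by
  rw [pder1_of, map_sum]
  refine Finset.sum_congr rfl fun j hj => ?_
  rw [Finset.mem_range] at hj
  rw [map_zsmul]
  by_cases cj : l[j]? = some q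
  · rw [if_pos cj, pder0_of]
    have hlen : (((l.take j).map (fun y => op y q)) ++ l.drop (j+1)).length = l.length - 1 := by
      simp [List.length_take, List.length_drop]; omega
    rw [hlen, Finset.smul_sum]
    refine Finset.sum_congr rfl fun i hi => ?_
    rw [smul_smul, sign_eq]
    simp only [T1, cj, true_and]
  · simp [cj, T1]


lemma comp2 (l : List X) :
    pder1 op q (pder0 q (FreeAbelianGroup.of l)) =
    ∑ a ∈ Finset.range l.length, ∑ b ∈ Finset.range (l.length - 1), T2 op q l a b := by
  rw [pder0_of, map_sum]
  refine Finset.sum_congr rfl fun a ha => ?_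
  rw [Finset.mem_range] at ha
  rw [map_zsmul]
  by_cases ca : l[a]? = some q
  · rw [if_pos ca, pder1_of]
    have hlen : (l.eraseIdx a).length = l.length - 1 := by
      rw [List.length_eraseIdx, if_pos ha]
    rw [hlen, Finset.smul_sum]
    refine Finset.sum_congr rfl fun b hb => ?_
    rw [smul_smul, sign_eq]
    simp only [T2, ca, true_and]
  · simp [ca, T2]

lemma erase_list_le (f : X → X) (l : List X) (j i : ℕ) (hji : j ≤ i) (hi : i + 1 < l.length) :
    ((l.take j).map f ++ l.drop (j+1)).eraseIdx i
      = ((l.eraseIdx (i+1)).take j).map f ++ (l.eraseIdx (i+1)).drop (j+1) := by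
  rw [List.eraseIdx_eq_take_drop_succ, List.eraseIdx_eq_take_drop_succ]
  have h1 : i ⊓ j = j := by omega
  have h2 : j ⊓ l.length = j := by omega
  have h3 : j - (i+1) = 0 := by omega
  have h4 : j ⊓ (i+1) = j := by omega
  have h5 : (i+1) ⊓ l.length = i+1 := by omega
  have h6 : j + 1 + (i + 1 - j) = i + 1 + 1 + (j + 1 - (i + 1)) := by omega
  simp [List.take_append, List.drop_append,
    List.take_take, List.drop_drop, List.drop_take, List.map_take, List.map_append,
    List.length_take, List.length_map, List.length_drop,
    h1, h2, h3, h4, h5, h6]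

lemma erase_list_lt (f : X → X) (l : List X) (j i : ℕ) (hij : i < j) (hj : j < l.length) :
    ((l.take j).map f ++ l.drop (j+1)).eraseIdx i
      = ((l.eraseIdx i).take (j-1)).map f ++ (l.eraseIdx i).drop (j-1+1) := by
  rw [List.eraseIdx_eq_take_drop_succ, List.eraseIdx_eq_take_drop_succ]
  have h1 : i ⊓ j = i := by omega
  have h2 : j - 1 + 1 = j := by omega
  have h3 : i ⊓ l.length = i := by omega
  have h4 : (j-1) ⊓ i = i := by omega
  have h5 : i + 1 + (j - (i+1)) = j := by omega
  have h6 : j - 1 - i + (i + 1) = j := by omega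
  have h7 : i + 1 + (j - 1 - i) = j := by omega
  have h8 : j ⊓ l.length = j := by omega
  have h9 : i - j = 0 := by omega
  have h10 : j - (i+1) = j - 1 - i := by omega
  have h11 : j + 1 + (i + 1 - j) = i + 1 + (j - i) := by omega
  simp [h8, h9, h10, h11, List.take_append, List.drop_append,
    List.take_take, List.drop_drop, List.drop_take, List.map_take, List.map_append,
    List.length_take, List.length_map, List.length_drop,
    h1, h2, h3, h4, h5, h6, h7]

lemma T_cancel_le (l : List X) (j i : ℕ) (hji : j ≤ i) (hi : i < l.length - 1) :
    T1 op q l j i = - T2 op q l (i+1) j := by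
  have hi' : i + 1 < l.length := by omega
  have hFi : ((l.take j).map (fun y => op y q) ++ l.drop (j+1))[i]? = l[i+1]? := by
    rw [List.getElem?_append_right (by simp [List.length_map, List.length_take]; omega)]
    rw [List.getElem?_drop]
    congr 1
    simp [List.length_map, List.length_take]
    omega
  have hE : (l.eraseIdx (i+1))[j]? = l[j]? := by
    rw [List.eraseIdx_eq_take_drop_succ, List.getElem?_append, List.getElem?_take]
    have : j < (l.take (i+1)).length := by simp [List.length_take]; omega
    rw [if_pos this, if_pos (by omega)]
  simp only [T1, T2, hFi, hE, erase_list_le (fun y => op y q) l j i hji hi']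
  simp only [and_comm]
  rw [← neg_smul]
  congr 1
  rw [show i+1+j = (j+i)+1 by ring, pow_succ]
  ring

lemma T_cancel_lt (hq : ∀ x : X, op x q = q ↔ x = q)
    (l : List X) (j i : ℕ) (hij : i < j) (hj : j < l.length) :
    T1 op q l j i = - T2 op q l i (j-1) := by
  have hi' : i < l.length := by omega
  have hFi : ((l.take j).map (fun y => op y q) ++ l.drop (j+1))[i]? = some (op l[i] q) := by
    rw [List.getElem?_append, if_pos (by simp [List.length_map, List.length_take]; omega),
      List.getElem?_map, List.getElem?_take, if_pos hij, List.getElem?_eq_getElem hi']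
    rfl
  have hE : (l.eraseIdx i)[j-1]? = l[j]? := by
    rw [List.eraseIdx_eq_take_drop_succ,
      List.getElem?_append_right (by simp [List.length_take]; omega), List.getElem?_drop]
    congr 1
    simp [List.length_take]
    omega
  have hcond : (l[j]? = some q ∧
      ((l.take j).map (fun y => op y q) ++ l.drop (j+1))[i]? = some q) ↔
      (l[i]? = some q ∧ (l.eraseIdx i)[j-1]? = some q) := by
    rw [hFi, hE, List.getElem?_eq_getElem hi']
    simp [hq, and_comm]
  simp only [T1, T2, erase_list_lt (fun y => op y q) l j i hij hj]
  rw [if_congr hcond rfl rfl, ← neg_smul]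
  congr 1
  rw [show j + i = (i+(j-1))+1 by omega, pow_succ]
  ring

end Aux

/-- For a quandle `Q` and `q ∈ Q`, the mixed partial derivatives anticommute:
`(∂⁰/∂q)∘(∂¹/∂q) + (∂¹/∂q)∘(∂⁰/∂q) = 0`. -/

theorem pder_mixed_anticommute {X : Type*} [DecidableEq X] (op : X → X → X) (q : X)
    (hidem : ∀ a : X, op a a = a)
    (hbij : ∀ b : X, Function.Bijective (fun x : X => op x b))
    (hdist : ∀ a b c : X, op (op a b) c = op (op a c) (op b c)) :
    (pder0 q).comp (pder1 op q) + (pder1 op q).comp (pder0 q) = 0 := by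

  have hq : ∀ x : X, op x q = q ↔ x = q := fun x =>
    ⟨fun h => (hbij q).1 (show op x q = op q q from h.trans (hidem q).symm),
     fun h => h ▸ hidem x⟩
  ext l
  simp only [AddMonoidHom.add_apply, AddMonoidHom.coe_comp, Function.comp_apply,
    AddMonoidHom.zero_apply]
  rw [comp1, comp2, ← Finset.sum_product', ← Finset.sum_product']
  have key : ∑ p ∈ Finset.range l.length ×ˢ Finset.range (l.length - 1),
        T1 op q l p.1 p.2 =
      ∑ p ∈ Finset.range l.length ×ˢ Finset.range (l.length - 1),
        (- T2 op q l p.1 p.2) := by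
    refine Finset.sum_nbij'
      (fun p => if p.1 ≤ p.2 then (p.2 + 1, p.1) else (p.2, p.1 - 1))
      (fun p => if p.2 < p.1 then (p.2, p.1 - 1) else (p.2 + 1, p.1))
      ?_ ?_ ?_ ?_ ?_
    · rintro ⟨j, i⟩ hp
      simp only [Finset.mem_product, Finset.mem_range] at hp ⊢
      split <;> simp <;> omega
    · rintro ⟨a, b⟩ hp
      simp only [Finset.mem_product, Finset.mem_range] at hp ⊢
      split <;> simp <;> omega
    · rintro ⟨j, i⟩ hp
      simp only [Finset.mem_product, Finset.mem_range] at hp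
      dsimp only
      split_ifs with h1 h2 h3 <;> simp_all [Prod.ext_iff] <;> omega
    · rintro ⟨a, b⟩ hp
      simp only [Finset.mem_product, Finset.mem_range] at hp
      dsimp only
      split_ifs with h1 h2 h3 <;> simp_all [Prod.ext_iff] <;> omega
    · rintro ⟨j, i⟩ hp
      simp only [Finset.mem_product, Finset.mem_range] at hp
      by_cases h : j ≤ i
      · simpa [h] using T_cancel_le op q l j i h hp.2
      · simpa [h] using T_cancel_lt op q hq l j i (by omega) hp.1
  rw [key, Finset.sum_neg_distrib, neg_add_cancel]
end

section
/- Let Q be a quandle and w ∈ C_ℓᴿ(Q) an extreme chain, i.e., ∂⁰(w)=0 and ∂¹w/∂q = 0 for all q ∈ Q. Then h_w : Cₙᴿ(Q) → C_{n+ℓ}ᴿ(Q) defined by h_w(x₁,…,xₙ) = (x₁,…,xₙ,w) (extended bilinearly) is a chain map: ∂∘h_w = h_w∘∂. In particular the boundary formula ∂(u,w) = (∂u, w) + (-1)^{n+1}[(u, ∂⁰w) - Σ_{q∈Q}(u*q, ∂¹w/∂q)] holds for u ∈ Cₙᴿ(Q). -/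
/-- The degenerate part `∂⁰` of the boundary: `∂⁰ = Σᵢ (-1)ⁱ ∂ᵢ⁰`. -/
noncomputable def rackBd0 {X : Type*} :
    FreeAbelianGroup (List X) →+ FreeAbelianGroup (List X) :=
  FreeAbelianGroup.lift (fun l =>
    ∑ j : Fin l.length, ((-1 : ℤ) ^ ((j : ℕ) + 1)) •
      FreeAbelianGroup.of (l.eraseIdx (j : ℕ)))

/-- `h_w(x₁,…,xₙ) = (x₁,…,xₙ,w)`, concatenation with the chain `w`,
extended bilinearly. -/
noncomputable def hw {X : Type*} (w : FreeAbelianGroup (List X)) :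
    FreeAbelianGroup (List X) →+ FreeAbelianGroup (List X) :=
  FreeAbelianGroup.lift (fun u => FreeAbelianGroup.map (fun v => u ++ v) w)

open FreeAbelianGroup in
lemma hw_of {X : Type*} (w : FreeAbelianGroup (List X)) (u : List X) :
    hw w (FreeAbelianGroup.of u) = FreeAbelianGroup.map (fun v => u ++ v) w :=
  FreeAbelianGroup.lift_apply_of _ _

lemma hw_zero {X : Type*} : hw (0 : FreeAbelianGroup (List X)) = 0 := by
  ext u; simp [hw_of]

lemma hw_add {X : Type*} (w₁ w₂ : FreeAbelianGroup (List X)) :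
    hw (w₁ + w₂) = hw w₁ + hw w₂ := by
  ext u; simp [hw_of]

lemma hw_neg {X : Type*} (w : FreeAbelianGroup (List X)) :
    hw (-w) = -(hw w) := by
  ext u; simp [hw_of]

lemma hw_of_right {X : Type*} (v : List X) :
    hw (FreeAbelianGroup.of v) = FreeAbelianGroup.map (fun t => t ++ v) := by
  ext u; simp [hw_of, FreeAbelianGroup.map_of_apply]

lemma key_gen {X : Type*} [Fintype X] [DecidableEq X] (op : X → X → X)
    (u v : List X) :
    rackBd op (FreeAbelianGroup.of (u ++ v)) =
      FreeAbelianGroup.map (fun t => t ++ v) (rackBd op (FreeAbelianGroup.of u)) +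
      ((-1 : ℤ) ^ u.length) •
        (FreeAbelianGroup.map (fun t => u ++ t) (rackBd0 (FreeAbelianGroup.of v)) -
         ∑ q : X, FreeAbelianGroup.map (fun t => (u.map (fun y => op y q)) ++ t)
           (pder1 op q (FreeAbelianGroup.of v))) := by
  classical
  simp only [rackBd, rackBd0, pder1, FreeAbelianGroup.lift_apply_of]
  rw [← Fin.sum_congr' _ (by simp : u.length + v.length = (u ++ v).length), Fin.sum_univ_add]
  simp only [map_sum, map_zsmul, map_sub, FreeAbelianGroup.map_of_apply,
    apply_ite (FreeAbelianGroup.map _), map_zero, smul_ite, smul_zero,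
    List.get_eq_getElem, Fin.coe_cast, Fin.coe_castAdd, Fin.coe_natAdd]
  rw [Finset.sum_comm]
  simp only [Finset.sum_ite_eq, Finset.mem_univ, if_true]
  rw [smul_sub, Finset.smul_sum, Finset.smul_sum, ← Finset.sum_sub_distrib]
  congr 1
  · refine Finset.sum_congr rfl fun j _ => ?_
    rw [List.eraseIdx_append_of_lt_length j.isLt, List.take_append_of_le_length j.isLt.le,
      List.drop_append_of_le_length j.isLt, List.getElem_append_left j.isLt]
    simp [List.append_assoc]
  · refine Finset.sum_congr rfl fun i _ => ?_
    rw [List.eraseIdx_append_of_length_le (Nat.le_add_right _ _) v,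
      List.getElem_append_right (Nat.le_add_right _ _)]
    rw [List.take_append, Nat.add_assoc, List.drop_append]
    simp only [Nat.add_sub_cancel_left, List.map_append]
    simp [smul_sub, smul_smul, ← pow_add, Nat.add_assoc, List.take_of_length_le, List.drop_of_length_le]

lemma key2 {X : Type*} [Fintype X] [DecidableEq X] (op : X → X → X)
    (u : List X) (w : FreeAbelianGroup (List X)) :
    rackBd op (hw w (FreeAbelianGroup.of u)) =
      hw w (rackBd op (FreeAbelianGroup.of u)) +
        ((-1 : ℤ) ^ u.length) •
          (FreeAbelianGroup.map (fun v => u ++ v) (rackBd0 w) -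
           ∑ q : X, FreeAbelianGroup.map (fun v => (u.map (fun y => op y q)) ++ v)
             (pder1 op q w)) := by
  induction w using FreeAbelianGroup.induction_on with
  | zero => simp [hw_zero]
  | of v =>
    rw [hw_of_right, FreeAbelianGroup.map_of_apply]
    exact key_gen op u v
  | neg w h =>
    simp only [hw_neg, AddMonoidHom.neg_apply, map_neg, Finset.sum_neg_distrib] at *
    rw [h]
    simp [smul_sub, smul_add]
    abel
  | add w₁ w₂ h1 h2 =>
    simp only [hw_add, AddMonoidHom.add_apply, map_add, Finset.sum_add_distrib] at *
    rw [h1, h2]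
    simp [smul_sub, smul_add]
    abel

/-- If `w` is an extreme chain of a finite quandle `Q` (`∂⁰w = 0` and
`∂¹w/∂q = 0` for all `q`), then `h_w` is a chain map; moreover the boundary
formula `∂(u,w) = (∂u,w) + (-1)^{n+1}[(u,∂⁰w) - Σ_q (u*q, ∂¹w/∂q)]` holds on
generators `u` of length `n`. -/
theorem extreme_chain_gives_chain_map {X : Type*} [Fintype X] [DecidableEq X]
    (op : X → X → X)
    (hidem : ∀ a : X, op a a = a)
    (hbij : ∀ b : X, Function.Bijective (fun x : X => op x b))
    (hdist : ∀ a b c : X, op (op a b) c = op (op a c) (op b c))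
    (w : FreeAbelianGroup (List X))
    (hw0 : rackBd0 w = 0) (hw1 : ∀ q : X, pder1 op q w = 0) :
    ((rackBd op).comp (hw w) = (hw w).comp (rackBd op)) ∧
    (∀ u : List X,
      rackBd op (hw w (FreeAbelianGroup.of u)) =
        hw w (rackBd op (FreeAbelianGroup.of u)) +
          ((-1 : ℤ) ^ (u.length + 1)) •
            (FreeAbelianGroup.map (fun v => u ++ v) (rackBd0 w) -
             ∑ q : X, FreeAbelianGroup.map
               (fun v => (u.map (fun y => op y q)) ++ v) (pder1 op q w))) := by
  constructor
  · ext u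
    simp only [AddMonoidHom.comp_apply]
    rw [key2 op u w, hw0]
    simp [hw1]
  · intro u
    rw [key2 op u w, hw0]
    simp [hw1]
end
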